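/- (Proposition 9.) Assume α ≠ 0 and β ≠ 0. In the dual space M* with dual basis (e₁, e₂, e₃), set φ₁ := 2e₁ − α·e₂ − β·e₃, φ₂ := −e₁ + 2e₂ − l·e₃, φ₃ := −e₁ − m·e₂ + 2e₃, and f₂ := α·φ₂, f₃ := β·φ₃. Then the dual maps sᵢ* (defined by sᵢ*(f) = f ∘ sᵢ) satisfy: s₁*(φ₁) = −φ₁, s₁*(f₂) = f₂ + α·φ₁, s₁*(f₃) = f₃ + β·φ₁; s₂*(f₂) = −f₂, s₂*(φ₁) = φ₁ + f₂, s₂*(f₃) = f₃ + (βm/α)·f₂; s₃*(f₃) = −f₃, s₃*(φ₁) = φ₁ + f₃, s₃*(f₂) = f₂ + (αl/β)·f₃. That is, the dual representation is the reflection representation with the same α, β, γ but with the parameters αl and βm interchanged. -/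
import Mathlib


noncomputable section

variable {K : Type*} [Field K] [CharZero K]

/-- The linear functional `x ↦ c 0 * x 0 + c 1 * x 1 + c 2 * x 2` on `K³`. -/
def lf (c : Fin 3 → K) : (Fin 3 → K) →ₗ[K] K :=
  c 0 • LinearMap.proj 0 + c 1 • LinearMap.proj 1 + c 2 • LinearMap.proj 2

/-- `s₁ : x ↦ x − (2x₁ − α x₂ − β x₃)·a₁` where `a₁ = Pi.single 0 1`. -/
def s1 (α β : K) : Module.End K (Fin 3 → K) :=
  LinearMap.id - (lf ![2, -α, -β]).smulRight (Pi.single 0 1)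

/-- `s₂ : x ↦ x − (−x₁ + 2x₂ − l·x₃)·a₂`. -/
def s2 (l : K) : Module.End K (Fin 3 → K) :=
  LinearMap.id - (lf ![-1, 2, -l]).smulRight (Pi.single 1 1)

/-- `s₃ : x ↦ x − (−x₁ − m·x₂ + 2x₃)·a₃`. -/
def s3 (m : K) : Module.End K (Fin 3 → K) :=
  LinearMap.id - (lf ![-1, -m, 2]).smulRight (Pi.single 2 1)

/-- `b = b₁ = (4−γ)a₁ + (l+2)a₂ + (m+2)a₃`, with `γ = l·m`. -/
def bvec (l m : K) : Fin 3 → K := ![4 - l * m, l + 2, m + 2]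

/-- `b₂ = (2α+βm)a₁ + (4−β)a₂ + (α+2m)a₃`. -/
def b2vec (α β l m : K) : Fin 3 → K := ![2*α + β*m, 4 - β, α + 2*m]

/-- `b₃ = (2β+αl)a₁ + (β+2l)a₂ + (4−α)a₃`. -/
def b3vec (α β l m : K) : Fin 3 → K := ![2*β + α*l, β + 2*l, 4 - α]

/-- `τ(λ,μ) : a₁ ↦ a₁ + ω·b, a₂ ↦ a₂ + λ·b, a₃ ↦ a₃ + μ·b`,
where `ω = −(λ(l+2) + μ(m+2))/(4−γ)`. -/
def tau (l m lam mu : K) : Module.End K (Fin 3 → K) :=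
  LinearMap.id +
    (lf ![-(lam*(l+2) + mu*(m+2))/(4 - l*m), lam, mu]).smulRight (bvec l m)

/-- `τ` applied to a vector `(λ,μ) ∈ K²`. -/
def tauv (l m : K) (v : K × K) : Module.End K (Fin 3 → K) := tau l m v.1 v.2

def c1 (α β : K) : K × K := (α, β)
def c2 (l : K) : K × K := (-2, l)
def c3 (m : K) : K × K := (m, -2)

/-- `z₁ : a₁ ↦ −a₁ + (2/(4−γ))·b, a₂ ↦ −a₂, a₃ ↦ −a₃`. -/
def z1 (l m : K) : Module.End K (Fin 3 → K) :=
  -LinearMap.id + (lf ![2/(4 - l*m), 0, 0]).smulRight (bvec l m)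

/-- `z₂ : a₂ ↦ −a₂ + (2/(l+2))·b, a₁ ↦ −a₁, a₃ ↦ −a₃`. -/
def z2 (l m : K) : Module.End K (Fin 3 → K) :=
  -LinearMap.id + (lf ![0, 2/(l+2), 0]).smulRight (bvec l m)

/-- `z₃ : a₃ ↦ −a₃ + (2/(m+2))·b, a₁ ↦ −a₁, a₂ ↦ −a₂`. -/
def z3 (l m : K) : Module.End K (Fin 3 → K) :=
  -LinearMap.id + (lf ![0, 0, 2/(m+2)]).smulRight (bvec l m)

/-- The linear functional `(λ,μ) ↦ c.1·λ + c.2·μ` on `K²`. -/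
def lf2 (c : K × K) : (K × K) →ₗ[K] K := c.1 • LinearMap.fst K K K + c.2 • LinearMap.snd K K K

/-- `σ₁(λ,μ) = (λ,μ) − ((λ(l+2)+μ(m+2))/(4−γ))·(α,β)`. -/
def sigma1 (α β l m : K) : Module.End K (K × K) :=
  LinearMap.id - (lf2 ((l+2)/(4 - l*m), (m+2)/(4 - l*m))).smulRight (α, β)

/-- `σ₂(λ,μ) = (λ,μ) + λ·(−2,l)`. -/
def sigma2 (l : K) : Module.End K (K × K) :=
  LinearMap.id + (LinearMap.fst K K K).smulRight ((-2 : K), l)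

/-- `σ₃(λ,μ) = (λ,μ) + μ·(m,−2)`. -/
def sigma3 (m : K) : Module.End K (K × K) :=
  LinearMap.id + (LinearMap.snd K K K).smulRight (m, (-2 : K))

/-- The sequence `u_x` : `u_x(0)=0, u_x(1)=u_x(2)=1, u_x(3)=x−1,
u_x(n+4) = (x−2)·u_x(n+2) − u_x(n)`. -/
def useq (x : K) : ℕ → K
  | 0 => 0
  | 1 => 1
  | 2 => 1
  | 3 => x - 1
  | (n+4) => (x - 2) * useq x (n+2) - useq x n



lemma lf_apply' (c x : Fin 3 → K) : lf c x = c 0 * x 0 + c 1 * x 1 + c 2 * x 2 := by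
  simp [lf, mul_comm]

lemma s1_apply' (α β : K) (x : Fin 3 → K) :
    s1 α β x = ![x 0 - (2*x 0 - α*x 1 - β*x 2), x 1, x 2] := by
  funext i
  fin_cases i <;>
    simp [s1, lf_apply', Pi.single_apply, Matrix.cons_val_zero, Matrix.cons_val_one] <;> ring

lemma s2_apply' (l : K) (x : Fin 3 → K) :
    s2 l x = ![x 0, x 1 - (-x 0 + 2*x 1 - l*x 2), x 2] := by
  funext i
  fin_cases i <;>
    simp [s2, lf_apply', Pi.single_apply, Matrix.cons_val_zero, Matrix.cons_val_one] <;> ring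

lemma s3_apply' (m : K) (x : Fin 3 → K) :
    s3 m x = ![x 0, x 1, x 2 - (-x 0 - m*x 1 + 2*x 2)] := by
  funext i
  fin_cases i <;>
    simp [s3, lf_apply', Pi.single_apply, Matrix.cons_val_zero, Matrix.cons_val_one] <;> ring

/-- Proposition 9: in the dual space, with `φ₁ = 2e₁ − αe₂ − βe₃`,
`φ₂ = −e₁ + 2e₂ − le₃`, `φ₃ = −e₁ − me₂ + 2e₃`, `f₂ = αφ₂`, `f₃ = βφ₃`, the dual
maps `sᵢ* : f ↦ f ∘ sᵢ` satisfy the listed identities (so the dual representation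
is the reflection representation with `αl` and `βm` interchanged). -/
theorem stmt19 (α β l m : K) (hα : α ≠ 0) (hβ : β ≠ 0) :
    (s1 α β).dualMap (lf ![2, -α, -β]) = -(lf ![2, -α, -β]) ∧
    (s1 α β).dualMap (α • lf ![-1, 2, -l])
      = α • lf ![-1, 2, -l] + α • lf ![2, -α, -β] ∧
    (s1 α β).dualMap (β • lf ![-1, -m, 2])
      = β • lf ![-1, -m, 2] + β • lf ![2, -α, -β] ∧
    (s2 l).dualMap (α • lf ![-1, 2, -l]) = -(α • lf ![-1, 2, -l]) ∧
    (s2 l).dualMap (lf ![2, -α, -β])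
      = lf ![2, -α, -β] + α • lf ![-1, 2, -l] ∧
    (s2 l).dualMap (β • lf ![-1, -m, 2])
      = β • lf ![-1, -m, 2] + (β*m/α) • (α • lf ![-1, 2, -l]) ∧
    (s3 m).dualMap (β • lf ![-1, -m, 2]) = -(β • lf ![-1, -m, 2]) ∧
    (s3 m).dualMap (lf ![2, -α, -β])
      = lf ![2, -α, -β] + β • lf ![-1, -m, 2] ∧
    (s3 m).dualMap (α • lf ![-1, 2, -l])
      = α • lf ![-1, 2, -l] + (α*l/β) • (β • lf ![-1, -m, 2]) := by
  have key : ∀ (f : (Fin 3 → K) →ₗ[K] K) (g : Module.End K (Fin 3 → K))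
      (h : (Fin 3 → K) →ₗ[K] K), (∀ x, f (g x) = h x) → g.dualMap f = h := by
    intro f g h hh; exact LinearMap.ext hh
  refine ⟨key _ _ _ fun x => ?_, key _ _ _ fun x => ?_, key _ _ _ fun x => ?_,
    key _ _ _ fun x => ?_, key _ _ _ fun x => ?_, key _ _ _ fun x => ?_,
    key _ _ _ fun x => ?_, key _ _ _ fun x => ?_, key _ _ _ fun x => ?_⟩ <;>
  simp only [s1_apply', s2_apply', s3_apply', lf_apply', LinearMap.neg_apply,
    LinearMap.add_apply, LinearMap.smul_apply, smul_eq_mul, Matrix.cons_val_zero,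
    Matrix.cons_val_one, Matrix.head_cons, Matrix.cons_val_two, Matrix.tail_cons] <;>
  field_simp <;> ring


end
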